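/- Let M = P₁ L P₂ R with N = r (square Monarch factors: L and R block-diagonal with N square blocks of size m = n/N, n = N·m, P₂ the perfect-shuffle permutation). Then, reshaping M as a 4-tensor M_{l j k i} (l,i ∈ {1,…,m}, j,k ∈ {1,…,N}), each m×m slice M_{:,j,k,:} has rank at most 1. -/

import Mathlib

open Matrix

/-- The perfect-shuffle permutation matrix on `Fin m × Fin m` (it sends position
`(k−1)m + i` to `(i−1)m + k`, i.e. swaps the two index coordinates). -/
def shuffle (m : ℕ) : Matrix (Fin m × Fin m) (Fin m × Fin m) ℝ :=
  Matrix.of fun a b => if a = b.swap then 1 else 0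

/-- Block-diagonal matrix on `Fin m × Fin m` with block index in the first coordinate. -/
def BD {m : ℕ} (L : Fin m → Matrix (Fin m) (Fin m) ℝ) :
    Matrix (Fin m × Fin m) (Fin m × Fin m) ℝ :=
  Matrix.of fun a b => if a.1 = b.1 then L a.1 a.2 b.2 else 0

section Monarch

variable {m : ℕ}

theorem shuffle_mul_apply (A : Matrix (Fin m × Fin m) (Fin m × Fin m) ℝ)
    (a b : Fin m × Fin m) : (shuffle m * A) a b = A a.swap b := by
  have swap_iff (c : Fin m × Fin m) : a = c.swap ↔ c = a.swap := by
    rw [eq_comm, Prod.swap_eq_iff_eq_swap]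
  simp [shuffle, mul_apply, swap_iff]

theorem mul_shuffle_apply (A : Matrix (Fin m × Fin m) (Fin m × Fin m) ℝ)
    (a b : Fin m × Fin m) : (A * shuffle m) a b = A a b.swap := by
  simp [shuffle, mul_apply]

theorem mul_BD_apply (A : Matrix (Fin m × Fin m) (Fin m × Fin m) ℝ)
    (L : Fin m → Matrix (Fin m) (Fin m) ℝ) (a : Fin m × Fin m) (k i : Fin m) :
    (A * BD L) a (k, i) = ∑ p, A a (k, p) * L k p i := by
  simp [BD, mul_apply, Fintype.sum_prod_type]

theorem BD_apply (L : Fin m → Matrix (Fin m) (Fin m) ℝ) (a b : Fin m × Fin m) :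
    BD L a b = if a.1 = b.1 then L a.1 a.2 b.2 else 0 := rfl

theorem monarch_apply (L R : Fin m → Matrix (Fin m) (Fin m) ℝ) (l j k i : Fin m) :
    (shuffle m * BD L * shuffle m * BD R) (l, j) (k, i) = L j l k * R k j i := by
  rw [mul_BD_apply]
  simp only [mul_shuffle_apply, shuffle_mul_apply, Prod.swap_prod_mk, BD_apply, ite_mul, zero_mul,
    Finset.sum_ite_eq, Finset.mem_univ, if_true]

theorem monarch_slice_eq_vecMulVec (L R : Fin m → Matrix (Fin m) (Fin m) ℝ) (j k : Fin m) :
    (Matrix.of fun l i : Fin m => (shuffle m * BD L * shuffle m * BD R) (l, j) (k, i)) =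
      vecMulVec (fun l => L j l k) (R k j) := by
  ext l i
  rw [of_apply, monarch_apply, vecMulVec_apply]

end Monarch

/-- Monarch structure theorem (forward direction): for `M = P₁ L P₂ R` with square
block-diagonal factors and perfect-shuffle permutations, every slice `M_{:,j,k,:}` of the
reshaped 4-tensor has rank at most 1. -/
theorem monarch_slices_rank_le_one (m : ℕ) (L R : Fin m → Matrix (Fin m) (Fin m) ℝ) :
    ∀ j k : Fin m,
      (Matrix.of fun l i : Fin m =>
        (shuffle m * BD L * shuffle m * BD R) (l, j) (k, i)).rank ≤ 1 := by
  intro j k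
  rw [monarch_slice_eq_vecMulVec]
  exact rank_vecMulVec_le _ _
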